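/- Let (g,[·,·],⟨·,·,·⟩) be a finite-dimensional Lie-Yamaguti algebra over a field K of characteristic 0. A Lie-Yamaguti algebra g admits a compatible pre-Lie-Yamaguti algebra structure (i.e., bilinear * and trilinear {·,·,·} making (g,*,{·,·,·}) a pre-Lie-Yamaguti algebra with x*y−y*x=[x,y] and {x,y,z}_D+{x,y,z}−{y,x,z}=⟨x,y,z⟩) if and only if there exist a representation (V;ρ,μ) of g and an invertible relative Rota-Baxter operator T: V→g on g with respect to (V;ρ,μ). -/

import Mathlib

/-- A map of two variables that is linear in each variable separately. -/
def IsBilin (K : Type*) {M N P : Type*} [Field K] [AddCommGroup M] [Module K M]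
    [AddCommGroup N] [Module K N] [AddCommGroup P] [Module K P]
    (f : M → N → P) : Prop :=
  (∀ y, IsLinearMap K fun x => f x y) ∧ (∀ x, IsLinearMap K fun y => f x y)

/-- A map of three variables that is linear in each variable separately. -/
def IsTrilin (K : Type*) {M P : Type*} [Field K] [AddCommGroup M] [Module K M]
    [AddCommGroup P] [Module K P] (f : M → M → M → P) : Prop :=
  (∀ y z, IsLinearMap K fun x => f x y z) ∧
  (∀ x z, IsLinearMap K fun y => f x y z) ∧
  (∀ x y, IsLinearMap K fun z => f x y z)

/-- A Lie-Yamaguti algebra structure: a bilinear skew-symmetric binary bracket `b` and a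
trilinear ternary bracket `t`, skew-symmetric in its first two arguments, satisfying
(LY1)-(LY4). -/
def IsLieYamaguti (K : Type*) {g : Type*} [Field K] [CharZero K] [AddCommGroup g] [Module K g]
    (b : g → g → g) (t : g → g → g → g) : Prop :=
  IsBilin K b ∧ IsTrilin K t ∧
  (∀ x y, b x y = - b y x) ∧
  (∀ x y z, t x y z = - t y x z) ∧
  (∀ x y z, b (b x y) z + b (b y z) x + b (b z x) y + t x y z + t y z x + t z x y = 0) ∧
  (∀ x y z w, t (b x y) z w + t (b y z) x w + t (b z x) y w = 0) ∧
  (∀ x y z w, t x y (b z w) = b (t x y z) w + b z (t x y w)) ∧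
  (∀ x y z w u, t x y (t z w u) = t (t x y z) w u + t z (t x y w) u + t z w (t x y u))

/-- The operator `D(x,y) = μ(y,x) − μ(x,y) + ρ(x)ρ(y) − ρ(y)ρ(x) − ρ([x,y])`. -/
def LYD (K : Type*) {g V : Type*} [Field K] [CharZero K] [AddCommGroup g] [Module K g]
    [AddCommGroup V] [Module K V]
    (b : g → g → g) (ρ : g → Module.End K V) (μ : g → g → Module.End K V)
    (x y : g) : Module.End K V :=
  μ y x - μ x y + ρ x * ρ y - ρ y * ρ x - ρ (b x y)

/-- A representation of a Lie-Yamaguti algebra `(g, b, t)` on `V`. -/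
def IsLYRep (K : Type*) {g V : Type*} [Field K] [CharZero K] [AddCommGroup g] [Module K g]
    [AddCommGroup V] [Module K V]
    (b : g → g → g) (t : g → g → g → g)
    (ρ : g → Module.End K V) (μ : g → g → Module.End K V) : Prop :=
  IsLinearMap K ρ ∧ IsBilin K μ ∧
  (∀ x y z, μ (b x y) z - μ x z * ρ y + μ y z * ρ x = 0) ∧
  (∀ x y z, μ x (b y z) - ρ y * μ x z + ρ z * μ x y = 0) ∧
  (∀ x y z, ρ (t x y z) = LYD K b ρ μ x y * ρ z - ρ z * LYD K b ρ μ x y) ∧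
  (∀ x y z w, μ z w * μ x y - μ y w * μ x z - μ x (t y z w) + LYD K b ρ μ y z * μ x w = 0) ∧
  (∀ x y z w, μ (t x y z) w + μ z (t x y w) = LYD K b ρ μ x y * μ z w - μ z w * LYD K b ρ μ x y)

/-- A relative Rota-Baxter operator on a Lie-Yamaguti algebra `(g, b, t)` with respect to a
representation `(V; ρ, μ)`. -/
def IsRelRB (K : Type*) {g V : Type*} [Field K] [CharZero K] [AddCommGroup g] [Module K g]
    [AddCommGroup V] [Module K V]
    (b : g → g → g) (t : g → g → g → g)
    (ρ : g → Module.End K V) (μ : g → g → Module.End K V) (T : V → g) : Prop :=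
  IsLinearMap K T ∧
  (∀ u v, b (T u) (T v) = T (ρ (T u) v - ρ (T v) u)) ∧
  (∀ u v w, t (T u) (T v) (T w) =
    T (LYD K b ρ μ (T u) (T v) w + μ (T v) (T w) u - μ (T u) (T w) v))

/-- The commutator `[x,y]_C = x*y − y*x`. -/
def preC {A : Type*} [AddCommGroup A] (m : A → A → A) (x y : A) : A := m x y - m y x

/-- The associator `(x,y,z) = (x*y)*z − x*(y*z)`. -/
def preAssoc {A : Type*} [AddCommGroup A] (m : A → A → A) (x y z : A) : A :=
  m (m x y) z - m x (m y z)

/-- `{x,y,z}_D = {z,y,x} − {z,x,y} + (y,x,z) − (x,y,z)`. -/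
def preD {A : Type*} [AddCommGroup A] (m : A → A → A) (br : A → A → A → A) (x y z : A) : A :=
  br z y x - br z x y + preAssoc m y x z - preAssoc m x y z

/-- A pre-Lie-Yamaguti algebra structure on `A`. -/
def IsPreLY (K : Type*) {A : Type*} [Field K] [CharZero K] [AddCommGroup A] [Module K A]
    (m : A → A → A) (br : A → A → A → A) : Prop :=
  IsBilin K m ∧ IsTrilin K br ∧
  (∀ x y z w, br z (preC m x y) w - br (m y z) x w + br (m x z) y w = 0) ∧
  (∀ x y z w, br x y (preC m z w) = m z (br x y w) - m w (br x y z)) ∧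
  (∀ x y z w t, br (br x y z) w t - br (br x y w) z t - br x y (preD m br z w t)
      - br x y (br z w t) + br x y (br w z t) + preD m br z w (br x y t) = 0) ∧
  (∀ x y z w t, br z (preD m br x y w) t + br z (br x y w) t - br z (br y x w) t
      + br z w (preD m br x y t) + br z w (br x y t) - br z w (br y x t)
      = preD m br x y (br z w t) - br (preD m br x y z) w t) ∧
  (∀ x y z w, m (preD m br x y z) w + m (br x y z) w - m (br y x z) w
      = preD m br x y (m z w) - m z (preD m br x y w))

/-- The ternary bracket `⟨x,y,z⟩_C = {x,y,z}_D + {x,y,z} − {y,x,z}` of the subadjacent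
Lie-Yamaguti algebra of a pre-Lie-Yamaguti algebra. -/
def subT {A : Type*} [AddCommGroup A] (m : A → A → A) (br : A → A → A → A) (x y z : A) : A :=
  preD m br x y z + br x y z - br y x z

/-- A symplectic structure on a Lie-Yamaguti algebra `(g, b, t)`: a nondegenerate
skew-symmetric bilinear form satisfying the two cocycle conditions. -/
def IsSymplectic (K : Type*) {g : Type*} [Field K] [CharZero K] [AddCommGroup g] [Module K g]
    (b : g → g → g) (t : g → g → g → g) (ω : g → g → K) : Prop :=
  IsBilin K ω ∧ (∀ x y, ω x y = - ω y x) ∧ (∀ x, (∀ y, ω x y = 0) → x = 0) ∧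
  (∀ x y z, ω x (b y z) + ω y (b z x) + ω z (b x y) = 0) ∧
  (∀ x y z w, ω z (t x y w) - ω x (t w z y) + ω y (t w z x) - ω w (t x y z) = 0)

/-- The dual map `ρ*` defined by `(ρ*(x) α)(v) = −α(ρ(x) v)`. -/
def dualRho (K : Type*) {g V : Type*} [Field K] [CharZero K] [AddCommGroup g] [Module K g]
    [AddCommGroup V] [Module K V] (ρ : g → Module.End K V) (x : g) :
    Module.End K (Module.Dual K V) := -(ρ x).dualMap

/-- The dual map `μ*` defined by `(μ*(x,y) α)(v) = −α(μ(x,y) v)`. -/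
def dualMu (K : Type*) {g V : Type*} [Field K] [CharZero K] [AddCommGroup g] [Module K g]
    [AddCommGroup V] [Module K V] (μ : g → g → Module.End K V) (x y : g) :
    Module.End K (Module.Dual K V) := -(μ x y).dualMap

/-- Left multiplication `L_x` of a pre-Lie-Yamaguti algebra, as a linear endomorphism. -/
def Llin (K : Type*) {A : Type*} [Field K] [CharZero K] [AddCommGroup A] [Module K A]
    (m : A → A → A) (hm : IsBilin K m) (x : A) : Module.End K A :=
  IsLinearMap.mk' (fun v => m x v) (hm.2 x)

/-- `𝓡(x,y) : z ↦ {z,x,y}` of a pre-Lie-Yamaguti algebra, as a linear endomorphism. -/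
def Rlin (K : Type*) {A : Type*} [Field K] [CharZero K] [AddCommGroup A] [Module K A]
    (br : A → A → A → A) (hbr : IsTrilin K br) (x y : A) : Module.End K A :=
  IsLinearMap.mk' (fun v => br v x y) (hbr.1 x y)

/-- `𝓛(x,y) : z ↦ {x,y,z}_D` of a pre-Lie-Yamaguti algebra, as a linear endomorphism. -/
def Dlin (K : Type*) {A : Type*} [Field K] [CharZero K] [AddCommGroup A] [Module K A]
    (m : A → A → A) (br : A → A → A → A) (hm : IsBilin K m) (hbr : IsTrilin K br)
    (x y : A) : Module.End K A :=
  Rlin K br hbr y x - Rlin K br hbr x y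
    + (Llin K m hm (m y x) - Llin K m hm y * Llin K m hm x)
    - (Llin K m hm (m x y) - Llin K m hm x * Llin K m hm y)
universe u v

/-!
A pre-Lie-Yamaguti structure `(*, {·,·,·})` compatible with `(g, [·,·], ⟨·,·,·⟩)` is the same
thing as a representation `(L, 𝓡)` of `g` on itself (`L x y = x * y`, `𝓡(x,y) z = {z,x,y}`) for
which the identity is a relative Rota-Baxter operator: (P1)–(P5) are (R1), (R2), (R4), (R5), (R3)
evaluated at a vector, and `{·,·,·}_D` is `D(L, 𝓡)`.

Conversely, any relative Rota-Baxter operator `T : V → g` makes `V` a pre-Lie-Yamaguti algebra by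
`u * v = ρ(Tu) v`, `{u,v,w} = μ(Tv,Tw) u`: the Rota-Baxter identities let one replace `T` of the
derived brackets of `V` by the brackets of `g`, after which the axioms become (R1)–(R5). `T` maps
the subadjacent brackets of `V` to those of `g`, so when `T` is bijective, transporting the
structure of `V` along `T` gives a compatible structure on `g`.
-/

theorem IsLinearMap.map_subT {K A P : Type*} [Field K] [AddCommGroup A] [Module K A]
    [AddCommGroup P] [Module K P] {f : A → P} (hf : IsLinearMap K f)
    (m : A → A → A) (br : A → A → A → A) (x y z : A) :
    f (subT m br x y z) = f (preD m br x y z) + f (br x y z) - f (br y x z) := by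
  rw [subT, hf.map_sub, hf.map_add]

section PreLY

variable {K A : Type*} [Field K] [CharZero K] [AddCommGroup A] [Module K A]
  {m : A → A → A} {br : A → A → A → A}

theorem isLinearMap_llin (hm : IsBilin K m) : IsLinearMap K (Llin K m hm) :=
  ⟨fun x y => LinearMap.ext fun v => (hm.1 v).map_add x y,
    fun c x => LinearMap.ext fun v => (hm.1 v).map_smul c x⟩

theorem isBilin_rlin (hbr : IsTrilin K br) : IsBilin K (Rlin K br hbr) :=
  ⟨fun y => ⟨fun x x' => LinearMap.ext fun v => (hbr.2.1 v y).map_add x x',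
      fun c x => LinearMap.ext fun v => (hbr.2.1 v y).map_smul c x⟩,
    fun x => ⟨fun y y' => LinearMap.ext fun v => (hbr.2.2 v x).map_add y y',
      fun c y => LinearMap.ext fun v => (hbr.2.2 v x).map_smul c y⟩⟩

theorem lyd_llin_rlin_apply (hm : IsBilin K m) (hbr : IsTrilin K br) (x y v : A) :
    LYD K (preC m) (Llin K m hm) (Rlin K br hbr) x y v = preD m br x y v := by
  have hC : m (preC m x y) v = m (m x y) v - m (m y x) v := (hm.1 v).map_sub _ _
  simp only [LYD, LinearMap.sub_apply, LinearMap.add_apply, Module.End.mul_apply, Llin, Rlin,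
    IsLinearMap.mk'_apply, hC, preD, preAssoc]
  abel

namespace IsPreLY

theorem isLYRep_llin_rlin (h : IsPreLY K m br) :
    IsLYRep K (preC m) (subT m br) (Llin K m h.1) (Rlin K br h.2.1) := by
  obtain ⟨hm, hbr, P1, P2, P3, P4, P5⟩ := h
  refine ⟨isLinearMap_llin hm, isBilin_rlin hbr, fun x y z => ?_, fun x y z => ?_,
    fun x y z => ?_, fun x y z w => ?_, fun x y z w => ?_⟩ <;> ext v <;>
    simp only [LinearMap.sub_apply, LinearMap.add_apply, Module.End.mul_apply,
      LinearMap.zero_apply, lyd_llin_rlin_apply, Llin, Rlin, IsLinearMap.mk'_apply]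
  · exact P1 x y v z
  · linear_combination (norm := abel) P2 v x y z
  · rw [subT, (hm.1 v).map_sub, (hm.1 v).map_add]
    exact P5 x y z v
  · rw [subT, (hbr.2.2 v x).map_sub, (hbr.2.2 v x).map_add]
    linear_combination (norm := abel) P3 v x y z w
  · rw [subT, subT, (hbr.2.1 v w).map_sub, (hbr.2.1 v w).map_add, (hbr.2.2 v z).map_sub,
      (hbr.2.2 v z).map_add]
    linear_combination (norm := abel) P4 x y v z w

theorem isRelRB_id (h : IsPreLY K m br) :
    IsRelRB K (preC m) (subT m br) (Llin K m h.1) (Rlin K br h.2.1) id :=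
  ⟨LinearMap.id.isLinear, fun _ _ => rfl, fun u v w => by
    simp only [id, lyd_llin_rlin_apply, Rlin, IsLinearMap.mk'_apply, subT]⟩

end IsPreLY

end PreLY

section RotaBaxter

variable {K g V : Type*} [Field K] [AddCommGroup g] [Module K g]
  [AddCommGroup V] [Module K V]

def rotaBaxterMul (ρ : g → Module.End K V) (T : V → g) (u v : V) : V := ρ (T u) v

def rotaBaxterBr (μ : g → g → Module.End K V) (T : V → g) (u v w : V) : V := μ (T v) (T w) u

variable {b : g → g → g} {t : g → g → g → g} {ρ : g → Module.End K V}
  {μ : g → g → Module.End K V} {T : V → g}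

theorem isBilin_rotaBaxterMul (hρ : IsLinearMap K ρ) (hT : IsLinearMap K T) :
    IsBilin K (rotaBaxterMul ρ T) :=
  ⟨fun v => ((LinearMap.applyₗ v).comp ((IsLinearMap.mk' ρ hρ).comp
      (IsLinearMap.mk' T hT))).isLinear,
    fun u => (ρ (T u)).isLinear⟩

theorem isTrilin_rotaBaxterBr (hμ : IsBilin K μ) (hT : IsLinearMap K T) :
    IsTrilin K (rotaBaxterBr μ T) :=
  ⟨fun v w => (μ (T v) (T w)).isLinear,
    fun u w => ((LinearMap.applyₗ u).comp ((IsLinearMap.mk' _ (hμ.1 (T w))).comp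
      (IsLinearMap.mk' T hT))).isLinear,
    fun u v => ((LinearMap.applyₗ u).comp ((IsLinearMap.mk' _ (hμ.2 (T v))).comp
      (IsLinearMap.mk' T hT))).isLinear⟩

variable [CharZero K]

namespace IsRelRB

theorem map_preC (hT : IsRelRB K b t ρ μ T) (u v : V) :
    T (preC (rotaBaxterMul ρ T) u v) = b (T u) (T v) :=
  (hT.2.1 u v).symm

theorem preD_eq_lyd (hρ : IsLinearMap K ρ) (hT : IsRelRB K b t ρ μ T) (u v w : V) :
    preD (rotaBaxterMul ρ T) (rotaBaxterBr μ T) u v w = LYD K b ρ μ (T u) (T v) w := by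
  have hb : ρ (b (T u) (T v)) w =
      ρ (T (rotaBaxterMul ρ T u v)) w - ρ (T (rotaBaxterMul ρ T v u)) w := by
    rw [← hT.map_preC, preC, hT.1.map_sub, hρ.map_sub, LinearMap.sub_apply]
  simp only [preD, preAssoc, LYD, LinearMap.sub_apply, LinearMap.add_apply,
    Module.End.mul_apply, hb, rotaBaxterMul, rotaBaxterBr]
  abel

theorem map_subT (hρ : IsLinearMap K ρ) (hT : IsRelRB K b t ρ μ T) (u v w : V) :
    T (subT (rotaBaxterMul ρ T) (rotaBaxterBr μ T) u v w) = t (T u) (T v) (T w) := by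
  rw [hT.2.2, subT, hT.preD_eq_lyd hρ]
  rfl

theorem isPreLY (hrep : IsLYRep K b t ρ μ) (hT : IsRelRB K b t ρ μ T) :
    IsPreLY K (rotaBaxterMul ρ T) (rotaBaxterBr μ T) := by
  obtain ⟨hρ, hμ, R1, R2, R3, R4, R5⟩ := hrep
  have hm := isBilin_rotaBaxterMul hρ hT.1
  have hbr := isTrilin_rotaBaxterBr hμ hT.1
  refine ⟨hm, hbr, fun x y z w => ?_, fun x y z w => ?_, fun x y z w s => ?_,
    fun x y z w s => ?_, fun x y z w => ?_⟩
  · have key := LinearMap.congr_fun (R1 (T x) (T y) (T w)) z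
    simp only [LinearMap.sub_apply, LinearMap.add_apply, Module.End.mul_apply,
      LinearMap.zero_apply] at key
    simp only [rotaBaxterBr, hT.map_preC]
    exact key
  · have key := LinearMap.congr_fun (R2 (T y) (T z) (T w)) x
    simp only [LinearMap.sub_apply, LinearMap.add_apply, Module.End.mul_apply,
      LinearMap.zero_apply] at key
    simp only [rotaBaxterBr, rotaBaxterMul, hT.map_preC]
    linear_combination (norm := abel) key
  · have key := LinearMap.congr_fun (R4 (T y) (T z) (T w) (T s)) x
    simp only [LinearMap.sub_apply, LinearMap.add_apply, Module.End.mul_apply,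
      LinearMap.zero_apply, ← hT.map_subT hρ] at key
    rw [hT.preD_eq_lyd hρ z w (rotaBaxterBr μ T x y s)]
    linear_combination (norm := (dsimp only [rotaBaxterBr]; abel)) key
      + (hbr.2.2 x y).map_subT (rotaBaxterMul ρ T) (rotaBaxterBr μ T) z w s
  · have key := LinearMap.congr_fun (R5 (T x) (T y) (T w) (T s)) z
    simp only [LinearMap.sub_apply, LinearMap.add_apply, Module.End.mul_apply,
      ← hT.map_subT hρ] at key
    rw [hT.preD_eq_lyd hρ x y z, hT.preD_eq_lyd hρ x y (rotaBaxterBr μ T z w s)]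
    linear_combination (norm := (dsimp only [rotaBaxterBr]; abel)) key
      - (hbr.2.1 z s).map_subT (rotaBaxterMul ρ T) (rotaBaxterBr μ T) x y w
      - (hbr.2.2 z w).map_subT (rotaBaxterMul ρ T) (rotaBaxterBr μ T) x y s
  · have key := LinearMap.congr_fun (R3 (T x) (T y) (T z)) w
    simp only [LinearMap.sub_apply, Module.End.mul_apply, ← hT.map_subT hρ] at key
    rw [hT.preD_eq_lyd hρ x y w, hT.preD_eq_lyd hρ x y (rotaBaxterMul ρ T z w)]
    linear_combination (norm := (dsimp only [rotaBaxterMul]; abel)) key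
      - (hm.1 w).map_subT (rotaBaxterMul ρ T) (rotaBaxterBr μ T) x y z

end IsRelRB

end RotaBaxter

section Transfer

variable {K A B : Type*} [Field K] [AddCommGroup A] [Module K A] [AddCommGroup B] [Module K B]
  (e : A ≃ₗ[K] B) (m : A → A → A) (br : A → A → A → A)

def transferMul (x y : B) : B := e (m (e.symm x) (e.symm y))

def transferBr (x y z : B) : B := e (br (e.symm x) (e.symm y) (e.symm z))

theorem preC_transferMul (x y : B) :
    preC (transferMul e m) x y = e (preC m (e.symm x) (e.symm y)) := by
  simp only [preC, transferMul, map_sub]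

theorem preD_transfer (x y z : B) :
    preD (transferMul e m) (transferBr e br) x y z =
      e (preD m br (e.symm x) (e.symm y) (e.symm z)) := by
  simp only [preD, preAssoc, transferMul, transferBr, map_sub, map_add,
    LinearEquiv.symm_apply_apply]

theorem subT_transfer (x y z : B) :
    subT (transferMul e m) (transferBr e br) x y z =
      e (subT m br (e.symm x) (e.symm y) (e.symm z)) := by
  simp only [subT, preD_transfer, transferBr, map_sub, map_add]

theorem isLinearMap_conj {f : A → A} (hf : IsLinearMap K f) :
    IsLinearMap K fun x => e (f (e.symm x)) :=
  (e.toLinearMap.comp ((IsLinearMap.mk' f hf).comp e.symm.toLinearMap)).isLinear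

variable {m br}

theorem IsPreLY.transfer [CharZero K] (h : IsPreLY K m br) :
    IsPreLY K (transferMul e m) (transferBr e br) := by
  obtain ⟨hm, hbr, P1, P2, P3, P4, P5⟩ := h
  refine ⟨⟨fun y => isLinearMap_conj e (hm.1 _), fun x => isLinearMap_conj e (hm.2 _)⟩,
    ⟨fun y z => isLinearMap_conj e (hbr.1 _ _), fun x z => isLinearMap_conj e (hbr.2.1 _ _),
      fun x y => isLinearMap_conj e (hbr.2.2 _ _)⟩,
    fun x y z w => ?_, fun x y z w => ?_, fun x y z w s => ?_, fun x y z w s => ?_,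
    fun x y z w => ?_⟩ <;>
  simp only [transferMul, transferBr, preC_transferMul, preD_transfer,
    LinearEquiv.symm_apply_apply, ← map_sub, ← map_add]
  · rw [P1, map_zero]
  · rw [P2]
  · rw [P3, map_zero]
  · rw [P4]
  · rw [P5]

end Transfer

theorem statement13_general (K : Type u) (g : Type v) [Field K] [CharZero K]
    [AddCommGroup g] [Module K g]
    (b : g → g → g) (t : g → g → g → g) :
    (∃ (m : g → g → g) (br : g → g → g → g),
        IsPreLY K m br ∧ (∀ x y, m x y - m y x = b x y) ∧
        (∀ x y z, preD m br x y z + br x y z - br y x z = t x y z)) ↔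
    (∃ (V : Type v) (instA : AddCommGroup V)
        (instM : @Module K V _ instA.toAddCommMonoid)
        (ρ : g → @Module.End K V _ instA.toAddCommMonoid instM)
        (μ : g → g → @Module.End K V _ instA.toAddCommMonoid instM) (T : V → g),
        @IsLYRep K g V _ _ _ _ instA instM b t ρ μ ∧
        @IsRelRB K g V _ _ _ _ instA instM b t ρ μ T ∧
        Function.Bijective T) := by
  constructor
  · rintro ⟨m, br, hpre, hb, ht⟩
    obtain rfl : b = preC m := funext₂ fun x y => (hb x y).symm
    obtain rfl : t = subT m br := funext₃ fun x y z => (ht x y z).symm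
    exact ⟨g, _, _, _, _, id, hpre.isLYRep_llin_rlin, hpre.isRelRB_id, Function.bijective_id⟩
  · rintro ⟨V, _, _, ρ, μ, T, hrep, hT, hbij⟩
    let e : V ≃ₗ[K] g := LinearEquiv.ofBijective (IsLinearMap.mk' T hT.1) hbij
    have hTe (x : g) : T (e.symm x) = x := e.apply_symm_apply x
    refine ⟨transferMul e (rotaBaxterMul ρ T), transferBr e (rotaBaxterBr μ T),
      (hT.isPreLY hrep).transfer e, fun x y => ?_, fun x y z => ?_⟩
    · rw [← preC, preC_transferMul]
      exact (hT.map_preC _ _).trans (by rw [hTe, hTe])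
    · rw [← subT, subT_transfer]
      exact (hT.map_subT hrep.1 _ _ _).trans (by rw [hTe, hTe, hTe])

/-- a Lie-Yamaguti algebra admits a compatible pre-Lie-Yamaguti algebra
structure iff it admits an invertible relative Rota-Baxter operator with respect to some
representation. -/
theorem statement13 (K : Type u) (g : Type v) [Field K] [CharZero K]
    [AddCommGroup g] [Module K g] [FiniteDimensional K g]
    (b : g → g → g) (t : g → g → g → g) (h : IsLieYamaguti K b t) :
    (∃ (m : g → g → g) (br : g → g → g → g),
        IsPreLY K m br ∧ (∀ x y, m x y - m y x = b x y) ∧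
        (∀ x y z, preD m br x y z + br x y z - br y x z = t x y z)) ↔
    (∃ (V : Type v) (instA : AddCommGroup V)
        (instM : @Module K V _ instA.toAddCommMonoid)
        (ρ : g → @Module.End K V _ instA.toAddCommMonoid instM)
        (μ : g → g → @Module.End K V _ instA.toAddCommMonoid instM) (T : V → g),
        @IsLYRep K g V _ _ _ _ instA instM b t ρ μ ∧
        @IsRelRB K g V _ _ _ _ instA instM b t ρ μ T ∧
        Function.Bijective T) :=
  statement13_general K g b t
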